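/- If Q is a nonnegative radially decreasing function on ℝᵈ, then 𝒞ₙ(Q) is radially decreasing for every n ≥ 1, and in particular 𝒯(𝒞ₙ(Q)) = 𝒞ₙ(Q) where 𝒯(g)(x) = g(−x). -/

import Mathlib

/-!
The convolution `conv f g` of two nonnegative, integrable, radially decreasing functions is again
radially decreasing, so induction on `n` applies. It is radial because Lebesgue measure is invariant
under the reflection exchanging two points of equal norm. It decreases along rays: for `p = a • v`,
`q = b • v` with `0 ≤ a ≤ b`, the substitution `u ↦ p + q - u` gives
`2 (conv f g q - conv f g p) = ∫ (f u - f (p + q - u)) (g (q - u) - g (p - u)) du`, and the two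
factors have opposite signs because `‖p + q - u‖² - ‖u‖²` and `‖q - u‖² - ‖p - u‖²` are the
multiples `a + b` and `b - a` of the same number `(a + b) ‖v‖² - 2 ⟪v, u⟫`.
-/

open MeasureTheory Real Set

noncomputable def conv {d : ℕ} (f g : EuclideanSpace ℝ (Fin d) → ℝ) :
    EuclideanSpace ℝ (Fin d) → ℝ :=
  fun x => ∫ y, f y * g (x - y)

/-- `Cconv f n` is the `n`-fold convolution power `𝒞ₙ(f)` for `n ≥ 1`. -/
noncomputable def Cconv {d : ℕ} (f : EuclideanSpace ℝ (Fin d) → ℝ) :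
    ℕ → EuclideanSpace ℝ (Fin d) → ℝ
  | 0 => f
  | 1 => f
  | (n + 2) => conv f (Cconv f (n + 1))

def RadiallyAntitone {E : Type*} [Norm E] (f : E → ℝ) : Prop :=
  ∀ x y : E, ‖x‖ ≤ ‖y‖ → f y ≤ f x

namespace RadiallyAntitone

variable {E : Type*} {f g : E → ℝ}

theorem apply_eq_of_norm_eq [Norm E] (hf : RadiallyAntitone f) {x y : E} (h : ‖x‖ = ‖y‖) :
    f x = f y :=
  le_antisymm (hf y x h.ge) (hf x y h.le)

theorem sub_mul_sub_nonpos [SeminormedAddCommGroup E] (hf : RadiallyAntitone f)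
    (hg : RadiallyAntitone g) {x y z w : E}
    (h : 0 ≤ (‖x‖ ^ 2 - ‖y‖ ^ 2) * (‖z‖ ^ 2 - ‖w‖ ^ 2)) :
    (f y - f x) * (g z - g w) ≤ 0 := by
  rcases lt_trichotomy ‖x‖ ‖y‖ with hxy | hxy | hxy
  · have hzw : ‖z‖ ≤ ‖w‖ := by
      by_contra! hwz
      have := mul_pos (sub_pos.2 (pow_lt_pow_left₀ hxy (norm_nonneg x) two_ne_zero))
        (sub_pos.2 (pow_lt_pow_left₀ hwz (norm_nonneg w) two_ne_zero))
      linarith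
    exact mul_nonpos_of_nonpos_of_nonneg (sub_nonpos.2 (hf x y hxy.le))
      (sub_nonneg.2 (hg z w hzw))
  · simp [hf.apply_eq_of_norm_eq hxy]
  · have hwz : ‖w‖ ≤ ‖z‖ := by
      by_contra! hzw
      have := mul_pos (sub_pos.2 (pow_lt_pow_left₀ hxy (norm_nonneg y) two_ne_zero))
        (sub_pos.2 (pow_lt_pow_left₀ hzw (norm_nonneg z) two_ne_zero))
      linarith
    exact mul_nonpos_of_nonneg_of_nonpos (sub_nonneg.2 (hf y x hxy.le))
      (sub_nonpos.2 (hg w z hwz))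

theorem sub_mul_sub_smul_nonpos [NormedAddCommGroup E] [InnerProductSpace ℝ E]
    (hf : RadiallyAntitone f) (hg : RadiallyAntitone g) (v u : E) {a b : ℝ} (ha : 0 ≤ a)
    (hab : a ≤ b) :
    (f u - f ((a + b) • v - u)) * (g (b • v - u) - g (a • v - u)) ≤ 0 := by
  apply hf.sub_mul_sub_nonpos hg
  have norm_smul_sub_sq : ∀ c : ℝ,
      ‖c • v - u‖ ^ 2 = c ^ 2 * ‖v‖ ^ 2 - 2 * c * inner ℝ v u + ‖u‖ ^ 2 := by
    intro c
    rw [norm_sub_sq_real, norm_smul, real_inner_smul_left, mul_pow, Real.norm_eq_abs, sq_abs]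
    ring
  rw [norm_smul_sub_sq, norm_smul_sub_sq, norm_smul_sub_sq]
  refine (mul_nonneg (mul_nonneg (by linarith : 0 ≤ a + b) (by linarith : 0 ≤ b - a))
    (sq_nonneg ((a + b) * ‖v‖ ^ 2 - 2 * inner ℝ v u))).trans_eq ?_
  ring

theorem measurable [NormedAddCommGroup E] [NormedSpace ℝ E] [MeasurableSpace E]
    [OpensMeasurableSpace E] (hf : RadiallyAntitone f) : Measurable f := by
  cases subsingleton_or_nontrivial E
  · exact Subsingleton.measurable
  obtain ⟨e, he⟩ := exists_norm_eq E zero_le_one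
  have norm_max_smul : ∀ t : ℝ, ‖max t 0 • e‖ = max t 0 := fun t => by
    rw [norm_smul, he, mul_one, Real.norm_of_nonneg (le_max_right t 0)]
  have hf_eq : f = (fun t : ℝ => f (max t 0 • e)) ∘ norm := by
    funext x
    refine hf.apply_eq_of_norm_eq ?_
    rw [norm_max_smul, max_eq_left (norm_nonneg x)]
  have hanti : Antitone fun t : ℝ => f (max t 0 • e) := fun s t hst =>
    hf _ _ (by rw [norm_max_smul, norm_max_smul]; exact max_le_max_right 0 hst)
  rw [hf_eq]
  exact hanti.measurable.comp measurable_norm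

end RadiallyAntitone

theorem integral_nonpos_of_add_comp_sub_left_nonpos {G : Type*} [MeasurableSpace G] [AddGroup G]
    [MeasurableAdd G] [MeasurableNeg G] {μ : Measure G} [μ.IsAddLeftInvariant] [μ.IsNegInvariant]
    {h : G → ℝ} (hh : Integrable h μ) (w : G) (hw : ∀ u, h u + h (w - u) ≤ 0) :
    ∫ u, h u ∂μ ≤ 0 := by
  have hsum : ∫ u, (h u + h (w - u)) ∂μ ≤ 0 := integral_nonpos hw
  rw [integral_add hh (hh.comp_sub_left w), integral_sub_left_eq_self h μ w] at hsum
  linarith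

section Convolution

variable {d : ℕ} {f g : EuclideanSpace ℝ (Fin d) → ℝ}

theorem conv_nonneg (hf : 0 ≤ f) (hg : 0 ≤ g) : 0 ≤ conv f g :=
  fun _ => integral_nonneg fun y => mul_nonneg (hf y) (hg _)

theorem conv_eq_of_norm_eq (hf : RadiallyAntitone f) (hg : RadiallyAntitone g)
    {x y : EuclideanSpace ℝ (Fin d)} (h : ‖x‖ = ‖y‖) : conv f g x = conv f g y := by
  set R := Submodule.reflection (ℝ ∙ (x - y))ᗮ
  have hRx : R x = y := Submodule.reflection_sub h
  calc conv f g x = ∫ z, f (R z) * g (R x - R z) := by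
        unfold conv
        congr 1 with z
        rw [hf.apply_eq_of_norm_eq (R.norm_map z).symm,
          hg.apply_eq_of_norm_eq (y := R x - R z) (by rw [← map_sub, R.norm_map])]
    _ = ∫ z, f z * g (R x - z) :=
        R.measurePreserving.integral_comp R.toHomeomorph.measurableEmbedding
          fun z => f z * g (R x - z)
    _ = conv f g y := by rw [hRx]; rfl

theorem conv_smul_le_conv_smul (hf_anti : RadiallyAntitone f) (hf : Integrable f)
    (hg_anti : RadiallyAntitone g) (hg0 : 0 ≤ g) (v : EuclideanSpace ℝ (Fin d)) {a b : ℝ}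
    (ha : 0 ≤ a) (hab : a ≤ b) : conv f g (b • v) ≤ conv f g (a • v) := by
  have hint : ∀ x, Integrable fun y => f y * g (x - y) := fun x =>
    hf.mul_bdd (hg_anti.measurable.comp (measurable_const.sub measurable_id)).aestronglyMeasurable
      (ae_of_all _ fun y => by rw [Real.norm_of_nonneg (hg0 _)]; exact hg_anti 0 _ (by simp))
  set h := fun u => f u * g (b • v - u) - f u * g (a • v - u)
  have hh : Integrable h := (hint (b • v)).sub (hint (a • v))
  have hdiff : conv f g (b • v) - conv f g (a • v) = ∫ u, h u :=
    (integral_sub (hint _) (hint _)).symm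
  have hsym : ∀ u, h u + h ((a + b) • v - u) ≤ 0 := by
    intro u
    have hgb : g (b • v - ((a + b) • v - u)) = g (a • v - u) :=
      hg_anti.apply_eq_of_norm_eq (by rw [← norm_neg (a • v - u)]; congr 1; module)
    have hga : g (a • v - ((a + b) • v - u)) = g (b • v - u) :=
      hg_anti.apply_eq_of_norm_eq (by rw [← norm_neg (b • v - u)]; congr 1; module)
    calc h u + h ((a + b) • v - u)
        = (f u - f ((a + b) • v - u)) * (g (b • v - u) - g (a • v - u)) := by
          simp only [h, hgb, hga]; ring
      _ ≤ 0 := hf_anti.sub_mul_sub_smul_nonpos hg_anti v u ha hab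
  linarith [integral_nonpos_of_add_comp_sub_left_nonpos hh _ hsym]

theorem radiallyAntitone_conv (hf_anti : RadiallyAntitone f) (hf : Integrable f)
    (hg_anti : RadiallyAntitone g) (hg0 : 0 ≤ g) : RadiallyAntitone (conv f g) := by
  intro x y hxy
  rcases eq_or_ne x 0 with rfl | hx
  · simpa using conv_smul_le_conv_smul hf_anti hf hg_anti hg0 y le_rfl zero_le_one
  have hx : 0 < ‖x‖ := norm_pos_iff.2 hx
  calc conv f g y = conv f g ((‖y‖ / ‖x‖) • x) := by
        refine conv_eq_of_norm_eq hf_anti hg_anti ?_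
        rw [norm_smul, Real.norm_of_nonneg (by positivity), div_mul_cancel₀ _ hx.ne']
    _ ≤ conv f g ((1 : ℝ) • x) :=
        conv_smul_le_conv_smul hf_anti hf hg_anti hg0 x zero_le_one ((one_le_div hx).2 hxy)
    _ = conv f g x := by rw [one_smul]

theorem radiallyAntitone_Cconv {Q : EuclideanSpace ℝ (Fin d) → ℝ} (hQ : Integrable Q)
    (hQ0 : 0 ≤ Q) (hQ_anti : RadiallyAntitone Q) :
    ∀ n, RadiallyAntitone (Cconv Q n) ∧ 0 ≤ Cconv Q n
  | 0 | 1 => ⟨hQ_anti, hQ0⟩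
  | n + 2 =>
    have ih := radiallyAntitone_Cconv hQ hQ0 hQ_anti (n + 1)
    ⟨radiallyAntitone_conv hQ_anti hQ ih.1 ih.2, conv_nonneg hQ0 ih.2⟩

end Convolution

theorem convolution_power_radially_decreasing_general {d : ℕ}
    (Q : EuclideanSpace ℝ (Fin d) → ℝ)
    (hQ_int : Integrable Q) (hQ_nonneg : ∀ x, 0 ≤ Q x)
    (hQ_raddec : ∀ x y : EuclideanSpace ℝ (Fin d), ‖x‖ ≤ ‖y‖ → Q y ≤ Q x) :
    ∀ n : ℕ, 1 ≤ n →
      (∀ x y : EuclideanSpace ℝ (Fin d), ‖x‖ ≤ ‖y‖ → Cconv Q n y ≤ Cconv Q n x) ∧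
      (∀ x : EuclideanSpace ℝ (Fin d), Cconv Q n (-x) = Cconv Q n x) := fun n _ =>
  have hQn := (radiallyAntitone_Cconv hQ_int hQ_nonneg hQ_raddec n).1
  ⟨hQn, fun x => hQn.apply_eq_of_norm_eq (norm_neg x)⟩

theorem convolution_power_radially_decreasing {d : ℕ} (hd : 1 ≤ d)
    (Q : EuclideanSpace ℝ (Fin d) → ℝ)
    (hQ_int : Integrable Q) (hQ_nonneg : ∀ x, 0 ≤ Q x)
    (hQ_raddec : ∀ x y : EuclideanSpace ℝ (Fin d), ‖x‖ ≤ ‖y‖ → Q y ≤ Q x) :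
    ∀ n : ℕ, 1 ≤ n →
      (∀ x y : EuclideanSpace ℝ (Fin d), ‖x‖ ≤ ‖y‖ → Cconv Q n y ≤ Cconv Q n x) ∧
      (∀ x : EuclideanSpace ℝ (Fin d), Cconv Q n (-x) = Cconv Q n x) :=
  convolution_power_radially_decreasing_general Q hQ_int hQ_nonneg hQ_raddec
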